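/- If F = (ℝ^m; f_1, …, f_N) is a point-fibred affine IFS with coding map π : {1,…,N}^∞ → ℝ^m, then A := π({1,…,N}^∞) is an attractor of F: A is nonempty and compact, A = ⋃_{n=1}^N f_n(A), and for every nonempty compact B ⊆ ℝ^m, the iterates F^{∘k}(B) converge to A in the Hausdorff metric, where F(B) = ⋃_n f_n(B). -/
import Mathlib


/-- `ifsComp f σ k x = f_{σ 0} ∘ f_{σ 1} ∘ ⋯ ∘ f_{σ (k-1)} (x)`. -/
def ifsComp {E : Type*} {N : ℕ} (f : Fin N → E → E) (σ : ℕ → Fin N) : ℕ → E → E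
  | 0, x => x
  | k + 1, x => ifsComp f σ k (f (σ k) x)

/-- The Hutchinson set map `F(B) = ⋃ₙ fₙ(B)` of an IFS. -/
def ifsSetMap {E : Type*} {N : ℕ} (f : Fin N → E → E) (B : Set E) : Set E :=
  ⋃ n : Fin N, f n '' B

namespace IFSAux

variable {N : ℕ} {E : Type*}

/-- Shift of a code sequence by `k`. -/
def shf (σ : ℕ → Fin N) (k : ℕ) : ℕ → Fin N := fun i => σ (i + k)

section Basic

lemma ifsComp_prefix (f : Fin N → E → E) {σ τ : ℕ → Fin N} :
    ∀ (k : ℕ), (∀ i < k, σ i = τ i) → ∀ x, ifsComp f σ k x = ifsComp f τ k x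
  | 0, _, x => rfl
  | k + 1, h, x => by
    rw [ifsComp, ifsComp, h k (Nat.lt_succ_self k),
      ifsComp_prefix f k (fun i hi => h i (hi.trans (Nat.lt_succ_self k)))]

lemma ifsComp_shift (f : Fin N → E → E) (σ : ℕ → Fin N) :
    ∀ (k : ℕ) (x : E), ifsComp f σ (k + 1) x = f (σ 0) (ifsComp f (shf σ 1) k x)
  | 0, x => rfl
  | k + 1, x => by
    show ifsComp f σ (k + 1) (f (σ (k+1)) x) = _
    rw [ifsComp_shift f σ k (f (σ (k+1)) x)]
    rfl

lemma mem_ifsSetMap {f : Fin N → E → E} {B : Set E} {y : E} :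
    y ∈ ifsSetMap f B ↔ ∃ n, ∃ x ∈ B, y = f n x := by
  simp [ifsSetMap, Set.mem_iUnion, eq_comm]

lemma mem_iterate [Nonempty (Fin N)] (f : Fin N → E → E) :
    ∀ (k : ℕ) (B : Set E) (y : E),
      y ∈ (ifsSetMap f)^[k] B ↔ ∃ σ : ℕ → Fin N, ∃ x ∈ B, y = ifsComp f σ k x
  | 0, B, y => by
    constructor
    · intro h; exact ⟨fun _ => Classical.arbitrary _, y, h, rfl⟩
    · rintro ⟨σ, x, hx, rfl⟩; exact hx
  | k + 1, B, y => by
    rw [Function.iterate_succ_apply, mem_iterate f k (ifsSetMap f B) y]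
    constructor
    · rintro ⟨σ, x, hx, rfl⟩
      rcases mem_ifsSetMap.mp hx with ⟨n, z, hz, rfl⟩
      refine ⟨fun i => if i < k then σ i else n, z, hz, ?_⟩
      have h2 : (if k < k then σ k else n) = n := if_neg (lt_irrefl k)
      calc ifsComp f σ k (f n z)
          = ifsComp f (fun i => if i < k then σ i else n) k (f n z) :=
            ifsComp_prefix f k (fun i hi => (if_pos hi).symm) _
        _ = ifsComp f (fun i => if i < k then σ i else n) (k + 1) z := by
            rw [ifsComp, h2]
    · rintro ⟨σ, x, hx, rfl⟩
      exact ⟨σ, f (σ k) x, mem_ifsSetMap.mpr ⟨σ k, x, hx, rfl⟩, rfl⟩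

end Basic

section Linear

variable [NormedAddCommGroup E] [NormedSpace ℝ E]

/-- Composition of the linear parts along a code prefix. -/
noncomputable def P (L : Fin N → E →L[ℝ] E) (σ : ℕ → Fin N) : ℕ → (E →L[ℝ] E)
  | 0 => ContinuousLinearMap.id ℝ E
  | k + 1 => (P L σ k).comp (L (σ k))

lemma P_prefix (L : Fin N → E →L[ℝ] E) {σ τ : ℕ → Fin N} :
    ∀ (k : ℕ), (∀ i < k, σ i = τ i) → P L σ k = P L τ k
  | 0, _ => rfl
  | k + 1, h => by
    rw [P, P, h k (Nat.lt_succ_self k),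
      P_prefix L k (fun i hi => h i (hi.trans (Nat.lt_succ_self k)))]

lemma P_comp (L : Fin N → E →L[ℝ] E) (σ : ℕ → Fin N) (j : ℕ) :
    ∀ (k : ℕ), P L σ (j + k) = (P L σ j).comp (P L (shf σ j) k)
  | 0 => by simp [P]
  | k + 1 => by
    rw [← Nat.add_assoc, P, P, P_comp L σ j k, ContinuousLinearMap.comp_assoc]
    congr 2
    simp [shf, Nat.add_comm]

lemma ifsComp_sub {f : Fin N → E → E} {L : Fin N → E →L[ℝ] E}
    (hL : ∀ n x y, f n x - f n y = L n (x - y)) (σ : ℕ → Fin N) :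
    ∀ (k : ℕ) (x y : E), ifsComp f σ k x - ifsComp f σ k y = P L σ k (x - y)
  | 0, x, y => rfl
  | k + 1, x, y => by
    rw [ifsComp, ifsComp, ifsComp_sub hL σ k (f (σ k) x) (f (σ k) y), hL (σ k) x y]
    rfl

end Linear

/-- Operator norm bound by sum of norms on the standard basis of Euclidean space. -/
lemma opNorm_le_sum {m : ℕ}
    (T : EuclideanSpace ℝ (Fin m) →L[ℝ] EuclideanSpace ℝ (Fin m)) :
    ‖T‖ ≤ ∑ i : Fin m, ‖T (EuclideanSpace.single i 1)‖ := by
  have hcoord : ∀ (x : EuclideanSpace ℝ (Fin m)) (i : Fin m), |x i| ≤ ‖x‖ := by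
    intro x i
    rw [← Real.sqrt_sq_eq_abs, EuclideanSpace.norm_eq]
    apply Real.sqrt_le_sqrt
    have := Finset.single_le_sum (f := fun j : Fin m => ‖x j‖ ^ 2)
      (fun j _ => sq_nonneg _) (Finset.mem_univ i)
    simpa [Real.norm_eq_abs, sq_abs] using this
  refine T.opNorm_le_bound (Finset.sum_nonneg fun i _ => norm_nonneg _) fun x => ?_
  have hx : x = ∑ i : Fin m, x i • EuclideanSpace.single i (1 : ℝ) := by
    have := (EuclideanSpace.basisFun (Fin m) ℝ).sum_repr x
    simpa [EuclideanSpace.basisFun_apply, EuclideanSpace.basisFun_repr] using this.symm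
  calc ‖T x‖ = ‖∑ i : Fin m, x i • T (EuclideanSpace.single i 1)‖ := by
        congr 1
        conv_lhs => rw [hx]
        simp [map_sum, map_smul]
    _ ≤ ∑ i : Fin m, ‖x i • T (EuclideanSpace.single i 1)‖ := norm_sum_le _ _
    _ ≤ ∑ i : Fin m, ‖x‖ * ‖T (EuclideanSpace.single i 1)‖ := by
        refine Finset.sum_le_sum fun i _ => ?_
        rw [norm_smul, Real.norm_eq_abs]
        exact mul_le_mul_of_nonneg_right (hcoord x i) (norm_nonneg _)
    _ = (∑ i : Fin m, ‖T (EuclideanSpace.single i 1)‖) * ‖x‖ := by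
        rw [← Finset.mul_sum, mul_comm]

end IFSAux

open IFSAux

theorem point_fibred_has_attractor (m N : ℕ) (hN : 0 < N)
    (f : Fin N → EuclideanSpace ℝ (Fin m) → EuclideanSpace ℝ (Fin m))
    (hf_affine : ∀ n, ∃ g : EuclideanSpace ℝ (Fin m) →ᵃ[ℝ] EuclideanSpace ℝ (Fin m),
      f n = g)
    (π : (ℕ → Fin N) → EuclideanSpace ℝ (Fin m))
    (hπ_cont : Continuous π)
    (hπ_lim : ∀ (σ : ℕ → Fin N) (x : EuclideanSpace ℝ (Fin m)),
      Filter.Tendsto (fun k => ifsComp f σ k x) Filter.atTop (nhds (π σ))) :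
    (Set.range π).Nonempty ∧ IsCompact (Set.range π) ∧
    Set.range π = ifsSetMap f (Set.range π) ∧
    ∀ B : Set (EuclideanSpace ℝ (Fin m)), B.Nonempty → IsCompact B →
      Filter.Tendsto (fun k => Metric.hausdorffDist ((ifsSetMap f)^[k] B) (Set.range π))
        Filter.atTop (nhds 0) := by 
  classical
  haveI hNE : Nonempty (Fin N) := Fin.pos_iff_nonempty.mp hN
  -- linear parts
  choose g hg using hf_affine
  set L : Fin N → EuclideanSpace ℝ (Fin m) →L[ℝ] EuclideanSpace ℝ (Fin m) :=
    fun n => (g n).linear.toContinuousLinearMap with hLdef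
  have hL : ∀ n x y, f n x - f n y = L n (x - y) := by
    intro n x y
    rw [hg n]
    have h := (g n).linearMap_vsub x y
    rw [vsub_eq_sub, vsub_eq_sub] at h
    rw [← h]
    show _ = (g n).linear.toContinuousLinearMap (x - y)
    rw [LinearMap.coe_toContinuousLinearMap']
  have hcont : ∀ n, Continuous (f n) := by
    intro n
    rw [hg n]
    exact AffineMap.continuous_of_finiteDimensional _
  -- functional equation
  have hfeq : ∀ σ : ℕ → Fin N, π σ = f (σ 0) (π (shf σ 1)) := by
    intro σ
    have h1 : Filter.Tendsto (fun k => ifsComp f σ (k + 1) 0) Filter.atTop (nhds (π σ)) :=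
      (hπ_lim σ 0).comp (Filter.tendsto_add_atTop_nat 1)
    have h2 : Filter.Tendsto (fun k => f (σ 0) (ifsComp f (shf σ 1) k 0)) Filter.atTop
        (nhds (f (σ 0) (π (shf σ 1)))) :=
      ((hcont (σ 0)).tendsto _).comp (hπ_lim (shf σ 1) 0)
    have he : (fun k => ifsComp f σ (k + 1) 0)
        = fun k => f (σ 0) (ifsComp f (shf σ 1) k 0) :=
      funext fun k => ifsComp_shift f σ k 0
    rw [he] at h1
    exact tendsto_nhds_unique h1 h2
  have hfeqk : ∀ (σ : ℕ → Fin N) (k : ℕ), π σ = ifsComp f σ k (π (shf σ k)) := by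
    intro σ k
    induction k with
    | zero =>
      have h : shf σ 0 = σ := funext fun i => by simp [shf]
      rw [h]; rfl
    | succ k ih =>
      have e1 : shf (shf σ k) 1 = shf σ (k + 1) := by
        funext i
        show σ (i + 1 + k) = σ (i + (k + 1))
        congr 1; omega
      have e2 : (shf σ k) 0 = σ k := by
        show σ (0 + k) = σ k
        rw [Nat.zero_add]
      have h := hfeq (shf σ k)
      rw [e1, e2] at h
      rw [ih, h]
      rfl
  -- self-similarity
  have hA : Set.range π = ifsSetMap f (Set.range π) := by
    ext y
    rw [mem_ifsSetMap]
    constructor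
    · rintro ⟨σ, rfl⟩
      exact ⟨σ 0, π (shf σ 1), ⟨_, rfl⟩, hfeq σ⟩
    · rintro ⟨n, x, ⟨σ, rfl⟩, rfl⟩
      refine ⟨fun i => if i = 0 then n else σ (i - 1), ?_⟩
      have h0 : (fun i => if i = 0 then n else σ (i - 1)) 0 = n := rfl
      have h1 : shf (fun i => if i = 0 then n else σ (i - 1)) 1 = σ := by
        funext i
        show (if i + 1 = 0 then n else σ (i + 1 - 1)) = σ i
        simp
      rw [hfeq (fun i => if i = 0 then n else σ (i - 1)), h1]
      simp
  -- pointwise decay of linear parts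
  have hP0 : ∀ (σ : ℕ → Fin N) (v : EuclideanSpace ℝ (Fin m)),
      Filter.Tendsto (fun k => P L σ k v) Filter.atTop (nhds 0) := by
    intro σ v
    have h := (hπ_lim σ v).sub (hπ_lim σ 0)
    rw [sub_self] at h
    have he : (fun k => ifsComp f σ k v - ifsComp f σ k 0) = fun k => P L σ k v := by
      funext k
      rw [ifsComp_sub hL σ k v 0, sub_zero]
    rwa [he] at h
  have hPn : ∀ σ, Filter.Tendsto (fun k => ‖P L σ k‖) Filter.atTop (nhds 0) := by
    intro σ
    have hb : Filter.Tendsto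
        (fun k => ∑ i : Fin m, ‖P L σ k (EuclideanSpace.single i 1)‖)
        Filter.atTop (nhds 0) := by
      have h := tendsto_finset_sum (Finset.univ : Finset (Fin m))
        (fun i _ => (hP0 σ (EuclideanSpace.single i 1)).norm)
      simpa using h
    exact squeeze_zero (fun k => norm_nonneg _) (fun k => opNorm_le_sum _) hb
  -- uniform exponent machinery
  set c : ℝ := 1 + ∑ n' : Fin N, ‖L n'‖ with hc
  have hsum0 : (0:ℝ) ≤ ∑ n' : Fin N, ‖L n'‖ := Finset.sum_nonneg fun _ _ => norm_nonneg _
  have hc1 : (1:ℝ) ≤ c := le_add_of_nonneg_right hsum0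
  have hc0 : (0:ℝ) ≤ c := by linarith
  have hcL : ∀ n', ‖L n'‖ ≤ c := fun n' =>
    (Finset.single_le_sum (fun j _ => norm_nonneg (L j)) (Finset.mem_univ n')).trans
      (le_add_of_nonneg_left zero_le_one)
  have hPc : ∀ (σ : ℕ → Fin N) (k : ℕ), ‖P L σ k‖ ≤ c ^ k := by
    intro σ k
    induction k with
    | zero =>
      rw [P, pow_zero]
      exact ContinuousLinearMap.norm_id_le
    | succ k ih =>
      rw [P]
      calc ‖(P L σ k).comp (L (σ k))‖ ≤ ‖P L σ k‖ * ‖L (σ k)‖ :=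
            ContinuousLinearMap.opNorm_comp_le _ _
        _ ≤ c ^ k * c := mul_le_mul ih (hcL _) (norm_nonneg _) (pow_nonneg hc0 k)
        _ = c ^ (k + 1) := (pow_succ c k).symm
  -- compactness: uniform cut
  obtain ⟨n, hn1, hcut⟩ : ∃ n, 1 ≤ n ∧ ∀ σ : ℕ → Fin N,
      ∃ j, 1 ≤ j ∧ j ≤ n ∧ ‖P L σ j‖ < 1 / 2 := by
    set U : ℕ → Set (ℕ → Fin N) :=
      fun k => {σ | ∃ j, 1 ≤ j ∧ j ≤ k ∧ ‖P L σ j‖ < 1 / 2} with hU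
    have hUopen : ∀ k, IsOpen (U k) := by
      intro k
      rw [isOpen_iff_mem_nhds]
      rintro σ ⟨j, hj1, hjk, hjn⟩
      have hcyl : {τ : ℕ → Fin N | ∀ i < j, τ i = σ i} ∈ nhds σ := by
        have he : {τ : ℕ → Fin N | ∀ i < j, τ i = σ i}
            = ⋂ i ∈ Finset.range j, {τ : ℕ → Fin N | τ i = σ i} := by
          ext τ; simp
        rw [he]
        refine (Filter.biInter_finset_mem _).mpr fun i _ => ?_
        refine IsOpen.mem_nhds ?_ rfl
        have hpre : {τ : ℕ → Fin N | τ i = σ i}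
            = (fun τ : ℕ → Fin N => τ i) ⁻¹' {σ i} := rfl
        rw [hpre]
        exact IsOpen.preimage (continuous_apply i) (isOpen_discrete _)
      refine Filter.mem_of_superset hcyl fun τ hτ => ⟨j, hj1, hjk, ?_⟩
      rw [P_prefix L j hτ]
      exact hjn
    have hUcover : ∀ σ, ∃ k, σ ∈ U k := by
      intro σ
      have h := (hPn σ).eventually_lt_const (by norm_num : (0:ℝ) < 1 / 2)
      rw [Filter.eventually_atTop] at h
      obtain ⟨a, ha⟩ := h
      exact ⟨max a 1, max a 1, le_max_right _ _, le_refl _, ha _ (le_max_left _ _)⟩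
    obtain ⟨t, ht⟩ := isCompact_univ.elim_finite_subcover U hUopen
      (fun σ _ => Set.mem_iUnion.mpr (hUcover σ))
    refine ⟨max 1 (t.sup id), le_max_left _ _, fun σ => ?_⟩
    have hm := ht (Set.mem_univ σ)
    rw [Set.mem_iUnion₂] at hm
    obtain ⟨k, hkt, j, hj1, hjk, hjn⟩ := hm
    exact ⟨j, hj1, hjk.trans ((Finset.le_sup (f := id) hkt).trans (le_max_right _ _)), hjn⟩
  -- main exponential bound
  have hmain : ∀ (k : ℕ) (σ : ℕ → Fin N),
      ‖P L σ k‖ ≤ c ^ n * (1 / 2) ^ (k / n) := by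
    intro k
    induction k using Nat.strong_induction_on with
    | _ k ih =>
      intro σ
      by_cases hk : k < n
      · have h1 : k / n = 0 := Nat.div_eq_of_lt hk
        rw [h1, pow_zero, mul_one]
        exact (hPc σ k).trans (pow_le_pow_right₀ hc1 hk.le)
      · push_neg at hk
        obtain ⟨j, hj1, hjn, hjhalf⟩ := hcut σ
        have hjk : j ≤ k := hjn.trans hk
        have hdecomp : P L σ k = (P L σ j).comp (P L (shf σ j) (k - j)) := by
          have h := P_comp L σ j (k - j)
          rwa [Nat.add_sub_cancel' hjk] at h
        have hrec := ih (k - j) (by omega) (shf σ j)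
        calc ‖P L σ k‖ ≤ ‖P L σ j‖ * ‖P L (shf σ j) (k - j)‖ := by
              rw [hdecomp]; exact ContinuousLinearMap.opNorm_comp_le _ _
          _ ≤ (1 / 2) * (c ^ n * (1 / 2) ^ ((k - j) / n)) :=
              mul_le_mul hjhalf.le hrec (norm_nonneg _) (by norm_num)
          _ = c ^ n * (1 / 2) ^ ((k - j) / n + 1) := by rw [pow_succ]; ring
          _ ≤ c ^ n * (1 / 2) ^ (k / n) := by
              refine mul_le_mul_of_nonneg_left ?_ (pow_nonneg hc0 n)
              refine pow_le_pow_of_le_one (by norm_num) (by norm_num) ?_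
              have hkle : k ≤ (k - j) + n := by omega
              calc k / n ≤ ((k - j) + n) / n := Nat.div_le_div_right hkle
                _ = (k - j) / n + 1 := Nat.add_div_right _ (by omega)
  -- conclusion
  refine ⟨⟨π (fun _ => Classical.arbitrary _), Set.mem_range_self _⟩,
    isCompact_range hπ_cont, hA, ?_⟩
  intro B hBne hBc
  obtain ⟨R1, hR1⟩ := (isCompact_range hπ_cont).isBounded.subset_closedBall 0
  obtain ⟨R2, hR2⟩ := hBc.isBounded.subset_closedBall 0
  set R : ℝ := max 0 (max R1 R2) with hR
  have hR0 : (0:ℝ) ≤ R := le_max_left _ _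
  have hπR : ∀ τ, ‖π τ‖ ≤ R := by
    intro τ
    have h := hR1 (Set.mem_range_self τ)
    rw [Metric.mem_closedBall, dist_zero_right] at h
    exact h.trans ((le_max_left _ _).trans (le_max_right _ _))
  have hBR : ∀ x ∈ B, ‖x‖ ≤ R := by
    intro x hx
    have h := hR2 hx
    rw [Metric.mem_closedBall, dist_zero_right] at h
    exact h.trans ((le_max_right _ _).trans (le_max_right _ _))
  obtain ⟨x₀, hx₀⟩ := hBne
  have hdistb : ∀ (k : ℕ) (σ : ℕ → Fin N) (x : EuclideanSpace ℝ (Fin m)), ‖x‖ ≤ R →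
      dist (ifsComp f σ k x) (π σ) ≤ c ^ n * (1 / 2) ^ (k / n) * (2 * R) := by
    intro k σ x hx
    rw [dist_eq_norm]
    have h1 : ifsComp f σ k x - π σ = P L σ k (x - π (shf σ k)) := by
      conv_lhs => rw [hfeqk σ k]
      exact ifsComp_sub hL σ k _ _
    rw [h1]
    calc ‖P L σ k (x - π (shf σ k))‖
        ≤ ‖P L σ k‖ * ‖x - π (shf σ k)‖ := ContinuousLinearMap.le_opNorm _ _
      _ ≤ c ^ n * (1 / 2) ^ (k / n) * (2 * R) := by
          refine mul_le_mul (hmain k σ) ?_ (norm_nonneg _)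
            (mul_nonneg (pow_nonneg hc0 n) (pow_nonneg (by norm_num) _))
          calc ‖x - π (shf σ k)‖ ≤ ‖x‖ + ‖π (shf σ k)‖ := norm_sub_le _ _
            _ ≤ R + R := add_le_add hx (hπR _)
            _ = 2 * R := by ring
  have hle : ∀ k, Metric.hausdorffDist ((ifsSetMap f)^[k] B) (Set.range π)
      ≤ c ^ n * (1 / 2) ^ (k / n) * (2 * R) := by
    intro k
    apply Metric.hausdorffDist_le_of_mem_dist
    · exact mul_nonneg (mul_nonneg (pow_nonneg hc0 n) (pow_nonneg (by norm_num) _))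
        (by linarith)
    · intro y hy
      obtain ⟨σ, x, hx, rfl⟩ := (mem_iterate f k B y).mp hy
      exact ⟨π σ, Set.mem_range_self σ, hdistb k σ x (hBR x hx)⟩
    · rintro y ⟨σ, rfl⟩
      refine ⟨ifsComp f σ k x₀, (mem_iterate f k B _).mpr ⟨σ, x₀, hx₀, rfl⟩, ?_⟩
      rw [dist_comm]
      exact hdistb k σ x₀ (hBR x₀ hx₀)
  have ht2 : Filter.Tendsto (fun k : ℕ => ((1:ℝ) / 2) ^ (k / n)) Filter.atTop (nhds 0) := by
    apply (tendsto_pow_atTop_nhds_zero_of_lt_one (by norm_num) (by norm_num)).comp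
    apply Filter.tendsto_atTop_atTop.mpr
    intro b
    exact ⟨b * n, fun a ha => (Nat.le_div_iff_mul_le (by omega)).mpr ha⟩
  have ht3 : Filter.Tendsto (fun k : ℕ => c ^ n * ((1:ℝ) / 2) ^ (k / n) * (2 * R))
      Filter.atTop (nhds 0) := by
    have h := (ht2.const_mul (c ^ n)).mul_const (2 * R)
    simpa using h
  exact squeeze_zero (fun k => Metric.hausdorffDist_nonneg) hle ht3
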